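/- Asymptotic primal feasibility from dual convergence: suppose λ^k_l → λ*_l for each l, the subgradient recursion λ^{k+1}_l ≥ λ^k_l + h_k (a_l(z^k) − R_l) holds with h_k ≥ 0 and Σ_k h_k = ∞, and z^k lies in a compact set so a_l(z^k) is bounded. Then the weighted averages z̄^t = lim_{T→∞} (Σ_{k=t+1}^{t+T} h_k z^k)/(Σ_{k=t+1}^{t+T} h_k), when they exist, satisfy a_l(z̄^t) ≤ R_l for all l, where a_l is the linear map a_l(z) = Σ_{s,c,v} X_v H^l_{s,c} z_{s,c,v}. -/
import Mathlib


open Finset Filter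

/-- Asymptotic primal feasibility from dual convergence: if the multipliers converge,
the step sizes are nonnegative with divergent sum, and the iterates are in the box,
then any weighted-average limit `z̄` of the iterates satisfies every link-capacity
constraint: `Σ_{s,c,v} X_v H^l_{s,c} z̄_{s,c,v} ≤ R_l`. -/
theorem asymptotic_primal_feasibility
    {S C V L : Type*} [Fintype S] [Fintype C] [Fintype V] [Fintype L]
    (X : V → ℝ) (hX : ∀ v, 0 ≤ X v)
    (H : L → S → C → ℝ) (hH : ∀ l s c, H l s c = 0 ∨ H l s c = 1)
    (R : L → ℝ) (hR : ∀ l, 0 < R l)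
    (h : ℕ → ℝ) (hh : ∀ k, 0 ≤ h k)
    (hdiv : Tendsto (fun n => ∑ k ∈ Finset.range n, h k) atTop atTop)
    (z : ℕ → S → C → V → ℝ)
    (hzbox : ∀ k s c v, 0 ≤ z k s c v ∧ z k s c v ≤ 1)
    (lam : ℕ → L → ℝ) (hlamnn : ∀ k l, 0 ≤ lam k l)
    (lamstar : L → ℝ)
    (hconv : ∀ l, Tendsto (fun k => lam k l) atTop (nhds (lamstar l)))
    (hrec : ∀ k l, lam (k + 1) l ≥
      lam k l + h k * ((∑ s, ∑ c, ∑ v, X v * H l s c * z k s c v) - R l))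
    (t : ℕ) (zbar : S → C → V → ℝ)
    (hzbar : ∀ s c v, Tendsto
      (fun T => (∑ k ∈ Finset.Ico (t + 1) (t + T + 1), h k * z k s c v)
        / (∑ k ∈ Finset.Ico (t + 1) (t + T + 1), h k))
      atTop (nhds (zbar s c v))) :
    ∀ l, (∑ s, ∑ c, ∑ v, X v * H l s c * zbar s c v) ≤ R l := by
  intro l
  set a : (S → C → V → ℝ) → ℝ := fun w => ∑ s, ∑ c, ∑ v, X v * H l s c * w s c v with ha
  set D : ℕ → ℝ := fun T => ∑ k ∈ Finset.Ico (t + 1) (t + T + 1), h k with hD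
  -- D tends to atTop
  have hDeq : ∀ T, D T = (∑ k ∈ Finset.range (t + T + 1), h k)
      - (∑ k ∈ Finset.range (t + 1), h k) := by
    intro T
    show (∑ k ∈ Finset.Ico (t + 1) (t + T + 1), h k) = _
    rw [Finset.sum_Ico_eq_sub _ (by omega)]
  have hDtop : Tendsto D atTop atTop := by
    have h1 : Tendsto (fun T => ∑ k ∈ Finset.range (t + T + 1), h k) atTop atTop := by
      exact hdiv.comp (tendsto_atTop_atTop.2 fun b => ⟨b, fun n hn => by omega⟩)
    have h2 := h1.atTop_add (tendsto_const_nhds :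
      Tendsto (fun _ : ℕ => -(∑ k ∈ Finset.range (t + 1), h k)) atTop
        (nhds (-(∑ k ∈ Finset.range (t + 1), h k))))
    exact h2.congr fun T => by rw [hDeq T]; ring
  -- telescoping
  have key : ∀ T, ∑ k ∈ Finset.Ico (t + 1) (t + T + 1), h k * (a (z k) - R l)
      ≤ lam (t + T + 1) l - lam (t + 1) l := by
    intro T
    induction T with
    | zero => simp
    | succ T ih =>
      have hstep := hrec (t + T + 1) l
      have hIco : t + (T + 1) + 1 = (t + T + 1) + 1 := by omega
      rw [hIco, Finset.sum_Ico_succ_top (by omega)]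
      simp only [ha] at hstep ih ⊢
      linarith
  -- the averaged constraint value
  have hAle : ∀ᶠ T in atTop,
      (∑ k ∈ Finset.Ico (t + 1) (t + T + 1), h k * a (z k)) / D T
        ≤ (lam (t + T + 1) l - lam (t + 1) l) / D T + R l := by
    filter_upwards [hDtop.eventually_gt_atTop 0] with T hDpos
    have hsum : ∑ k ∈ Finset.Ico (t + 1) (t + T + 1), h k * a (z k)
        ≤ (lam (t + T + 1) l - lam (t + 1) l) + R l * D T := by
      have := key T
      have hsplit : ∑ k ∈ Finset.Ico (t + 1) (t + T + 1), h k * (a (z k) - R l)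
          = (∑ k ∈ Finset.Ico (t + 1) (t + T + 1), h k * a (z k)) - R l * D T := by
        rw [hD, Finset.mul_sum, ← Finset.sum_sub_distrib]
        congr 1; ext k; ring
      linarith [hsplit ▸ this]
    calc (∑ k ∈ Finset.Ico (t + 1) (t + T + 1), h k * a (z k)) / D T
        ≤ ((lam (t + T + 1) l - lam (t + 1) l) + R l * D T) / D T :=
          div_le_div_of_nonneg_right hsum hDpos.le
      _ = (lam (t + T + 1) l - lam (t + 1) l) / D T + R l := by
          field_simp
  -- LHS tends to a zbar
  have hswap : ∀ T, (∑ k ∈ Finset.Ico (t + 1) (t + T + 1), h k * a (z k)) / D T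
      = ∑ s, ∑ c, ∑ v, X v * H l s c *
          ((∑ k ∈ Finset.Ico (t + 1) (t + T + 1), h k * z k s c v) / D T) := by
    intro T
    have : ∑ k ∈ Finset.Ico (t + 1) (t + T + 1), h k * a (z k)
        = ∑ s, ∑ c, ∑ v, X v * H l s c *
            (∑ k ∈ Finset.Ico (t + 1) (t + T + 1), h k * z k s c v) := by
      simp only [ha, Finset.mul_sum]
      rw [Finset.sum_comm]
      refine Finset.sum_congr rfl fun s _ => ?_
      rw [Finset.sum_comm]
      refine Finset.sum_congr rfl fun c _ => ?_
      rw [Finset.sum_comm]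
      refine Finset.sum_congr rfl fun v _ => ?_
      refine Finset.sum_congr rfl fun k _ => ?_
      ring
    rw [this]
    simp only [Finset.sum_div, mul_div_assoc]
  have hLHS : Tendsto (fun T => (∑ k ∈ Finset.Ico (t + 1) (t + T + 1), h k * a (z k)) / D T)
      atTop (nhds (∑ s, ∑ c, ∑ v, X v * H l s c * zbar s c v)) := by
    simp only [hswap]
    refine tendsto_finset_sum _ fun s _ => ?_
    refine tendsto_finset_sum _ fun c _ => ?_
    refine tendsto_finset_sum _ fun v _ => ?_
    exact (hzbar s c v).const_mul _
  -- RHS tends to R l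
  have hRHS : Tendsto (fun T => (lam (t + T + 1) l - lam (t + 1) l) / D T + R l)
      atTop (nhds (R l)) := by
    have hnum : Tendsto (fun T => lam (t + T + 1) l - lam (t + 1) l) atTop
        (nhds (lamstar l - lam (t + 1) l)) := by
      have := (hconv l).comp (tendsto_atTop_atTop.2 (fun b => ⟨b, fun n hn => by omega⟩)
        : Tendsto (fun T : ℕ => t + T + 1) atTop atTop)
      exact this.sub_const _
    have h0 : Tendsto (fun T => (lam (t + T + 1) l - lam (t + 1) l) / D T) atTop (nhds 0) :=
      hnum.div_atTop hDtop
    simpa using h0.add_const (R l)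
  exact le_of_tendsto_of_tendsto hLHS hRHS hAle
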